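/- Let M ∈ U(2,1;O₇) fix q∞, i.e. M·(1,0,0)ᵗ is a complex scalar multiple of (1,0,0)ᵗ. Then M or −M lies in the subgroup of GL(3,ℂ) generated by the four matrices R₁, R₂, R₃, T. Equivalently, the stabiliser of q∞ in PU(2,1;O₇) = U(2,1;O₇)/{±I} is generated by the classes of R₁, R₂, R₃ and T. -/

import Mathlib

noncomputable section

open Matrix Complex

/-- The Gram matrix `J` of the Hermitian form of signature (2,1). -/
def Jmat : Matrix (Fin 3) (Fin 3) ℂ := !![0,0,1; 0,1,0; 1,0,0]

lemma Jmat_mul_Jmat : Jmat * Jmat = 1 := by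
  simp [Jmat, Matrix.mul_fin_three, Matrix.one_fin_three]

/-- A matrix satisfying `Mᴴ J M = J`, viewed as an element of `GL (Fin 3) ℂ`. -/
def toGL (M : Matrix (Fin 3) (Fin 3) ℂ) (h : Mᴴ * Jmat * M = Jmat) : GL (Fin 3) ℂ where
  val := M
  inv := Jmat * Mᴴ * Jmat
  inv_val := by
    calc (Jmat * Mᴴ * Jmat) * M = Jmat * (Mᴴ * Jmat * M) := by
          simp only [Matrix.mul_assoc]
    _ = 1 := by rw [h, Jmat_mul_Jmat]
  val_inv := by
    apply mul_eq_one_comm.mp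
    calc (Jmat * Mᴴ * Jmat) * M = Jmat * (Mᴴ * Jmat * M) := by
          simp only [Matrix.mul_assoc]
    _ = 1 := by rw [h, Jmat_mul_Jmat]

/-- `ω₇ = (1 + i√7)/2`. -/
def ω : ℂ := (1 + Complex.I * (√7 : ℝ)) / 2

/-- The ring of integers `O₇ = ℤ[ω₇]` of `ℚ(√-7)`, as a subset of `ℂ`. -/
def O7 : Set ℂ := {z | ∃ a b : ℤ, z = (a : ℂ) + (b : ℂ) * ω}

def I₀ : Matrix (Fin 3) (Fin 3) ℂ := !![0,0,1; 0,-1,0; 1,0,0]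

def R₁ : Matrix (Fin 3) (Fin 3) ℂ := !![1,0,0; 0,-1,0; 0,0,1]

def R₂ : Matrix (Fin 3) (Fin 3) ℂ := !![1, 1, -((starRingEnd ℂ) ω); 0,-1,1; 0,0,1]

def R₃ : Matrix (Fin 3) (Fin 3) ℂ := !![1, (starRingEnd ℂ) ω, -1; 0, -1, ω; 0,0,1]

def T : Matrix (Fin 3) (Fin 3) ℂ := !![1, 0, Complex.I*(√7:ℝ); 0,1,0; 0,0,1]

lemma hI₀ : I₀ᴴ * Jmat * I₀ = Jmat := by
  ext i j
  fin_cases i <;> fin_cases j <;>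
    simp [Matrix.mul_apply, Fin.sum_univ_three, Jmat, I₀, Matrix.conjTranspose_apply,
      Matrix.vecHead, Matrix.vecTail]

lemma hR₁ : R₁ᴴ * Jmat * R₁ = Jmat := by
  ext i j
  fin_cases i <;> fin_cases j <;>
    simp [Matrix.mul_apply, Fin.sum_univ_three, Jmat, R₁, Matrix.conjTranspose_apply,
      Matrix.vecHead, Matrix.vecTail]

lemma hR₂ : R₂ᴴ * Jmat * R₂ = Jmat := by
  ext i j
  fin_cases i <;> fin_cases j <;>
    simp [Matrix.mul_apply, Fin.sum_univ_three, Jmat, R₂, ω, Matrix.conjTranspose_apply,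
      Matrix.vecHead, Matrix.vecTail] <;>
    ring_nf <;>
    simp [Complex.ext_iff, ← Complex.ofReal_pow, Real.sq_sqrt] <;>
    ring_nf

lemma hR₃ : R₃ᴴ * Jmat * R₃ = Jmat := by
  ext i j
  fin_cases i <;> fin_cases j <;>
    simp [Matrix.mul_apply, Fin.sum_univ_three, Jmat, R₃, ω, Matrix.conjTranspose_apply,
      Matrix.vecHead, Matrix.vecTail] <;>
    ring_nf <;>
    simp [Complex.ext_iff, ← Complex.ofReal_pow, Real.sq_sqrt] <;>
    ring_nf

lemma hT : Tᴴ * Jmat * T = Jmat := by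
  ext i j
  fin_cases i <;> fin_cases j <;>
    simp [Matrix.mul_apply, Fin.sum_univ_three, Jmat, T, Matrix.conjTranspose_apply,
      Matrix.vecHead, Matrix.vecTail]

/-!
A matrix fixing `q∞` is upper triangular, and unitarity makes its diagonal entries units of
`O₇`, i.e. `±1`. After a sign and possibly a factor `R₁` it becomes a Heisenberg translation
`heis β γ` with `γ + conj γ = -β conj β`. The products `R₂ R₁` and `R₃ R₁` are translations over
`β = -1` and `β = -conj ω`, which generate `O₇` additively, and `T` is the vertical translation by
`i√7`. Since the generated group lies in `U(2,1; O₇)`, two of its translations over the same `β`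
differ by a vertical translation by a purely imaginary element of `O₇`, an integer multiple of
`i√7`, so every admissible translation is reached.
-/

open ComplexConjugate

local notation "Mat₃" => Matrix (Fin 3) (Fin 3) ℂ

lemma I_mul_sqrt_seven_sq : (I * (√7 : ℝ) : ℂ) ^ 2 = -7 := by
  rw [mul_pow, I_sq, ← ofReal_pow, Real.sq_sqrt (by norm_num)]; push_cast; ring

lemma conj_I_mul_sqrt_seven : conj (I * (√7 : ℝ) : ℂ) = -(I * (√7 : ℝ)) := by
  simp

lemma two_mul_ω_sub_one : 2 * ω - 1 = I * (√7 : ℝ) := by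
  simp only [ω]; ring

lemma conj_ω : conj ω = 1 - ω := by
  simp only [ω, map_div₀, map_add, map_one, conj_I_mul_sqrt_seven, map_ofNat]; ring

lemma ω_mul_self : ω * ω = ω - 2 := by
  simp only [ω]; linear_combination (1 / 4 : ℂ) * I_mul_sqrt_seven_sq

def O7ring : Subring ℂ where
  carrier := O7
  mul_mem' := by
    rintro _ _ ⟨a, b, rfl⟩ ⟨c, d, rfl⟩
    exact ⟨a * c - 2 * (b * d), a * d + b * c + b * d, by
      push_cast; linear_combination (b * d : ℂ) * ω_mul_self⟩
  one_mem' := ⟨1, 0, by simp⟩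
  add_mem' := by
    rintro _ _ ⟨a, b, rfl⟩ ⟨c, d, rfl⟩
    exact ⟨a + c, b + d, by push_cast; ring⟩
  zero_mem' := ⟨0, 0, by simp⟩
  neg_mem' := by
    rintro _ ⟨a, b, rfl⟩
    exact ⟨-a, -b, by push_cast; ring⟩

namespace O7ring

lemma ω_mem : ω ∈ O7ring := ⟨0, 1, by simp⟩

lemma conj_mem {z : ℂ} (hz : z ∈ O7ring) : conj z ∈ O7ring := by
  obtain ⟨a, b, rfl⟩ := hz
  exact ⟨a + b, -b, by simp only [map_add, map_mul, map_intCast, conj_ω]; push_cast; ring⟩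

lemma I_mul_sqrt_seven_mem : (I * (√7 : ℝ) : ℂ) ∈ O7ring := by
  rw [← two_mul_ω_sub_one]
  exact sub_mem (mul_mem (ofNat_mem _ 2) ω_mem) (one_mem _)

lemma mul_conj_eq_norm (a b : ℤ) :
    ((a : ℂ) + b * ω) * conj ((a : ℂ) + b * ω) = ((a ^ 2 + a * b + 2 * b ^ 2 : ℤ) : ℂ) := by
  simp only [map_add, map_mul, map_intCast, conj_ω]; push_cast
  linear_combination (-(b : ℂ) ^ 2) * ω_mul_self

lemma eq_one_or_eq_neg_one_of_mul_eq_one {z w : ℂ} (hz : z ∈ O7ring) (hw : w ∈ O7ring)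
    (h : z * w = 1) : z = 1 ∨ z = -1 := by
  obtain ⟨a, b, rfl⟩ := hz
  obtain ⟨c, d, rfl⟩ := hw
  have hnorm : (a ^ 2 + a * b + 2 * b ^ 2) * (c ^ 2 + c * d + 2 * d ^ 2) = 1 := by
    have := congrArg (fun u => u * conj u) h
    simp only [map_mul, map_one, mul_one] at this
    rw [mul_mul_mul_comm, mul_conj_eq_norm, mul_conj_eq_norm] at this
    exact_mod_cast this
  have hnorm_z : a ^ 2 + a * b + 2 * b ^ 2 = 1 := by
    rcases Int.eq_one_or_neg_one_of_mul_eq_one hnorm with h1 | h1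
    · exact h1
    · nlinarith [sq_nonneg (2 * a + b), sq_nonneg b]
  have hb : b = 0 := by nlinarith [sq_nonneg (2 * a + b), sq_nonneg b]
  subst hb
  rcases Int.eq_one_or_neg_one_of_mul_eq_one (by linarith : a * a = 1) with rfl | rfl <;> simp

lemma eq_one_or_eq_neg_one_of_conj_mul_eq_one {z w : ℂ} (hz : z ∈ O7ring) (hw : w ∈ O7ring)
    (h : conj z * w = 1) : z = 1 ∨ z = -1 := by
  rcases eq_one_or_eq_neg_one_of_mul_eq_one (conj_mem hz) hw h with h1 | h1
  · left; simpa using congrArg conj h1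
  · right; simpa using congrArg conj h1

lemma exists_int_mul_of_add_conj_eq_zero {z : ℂ} (hz : z ∈ O7ring) (h : z + conj z = 0) :
    ∃ k : ℤ, z = k * (I * (√7 : ℝ)) := by
  obtain ⟨a, b, rfl⟩ := hz
  have hb : b = -2 * a := by
    have : ((2 * a + b : ℤ) : ℂ) = 0 := by
      simp only [map_add, map_mul, map_intCast, conj_ω] at h; push_cast; linear_combination h
    have : 2 * a + b = 0 := by exact_mod_cast this
    omega
  exact ⟨-a, by rw [hb, ← two_mul_ω_sub_one]; push_cast; ring⟩

end O7ring

lemma conj_mul_add_eq_Jmat_apply {A : Mat₃} (hA : Aᴴ * Jmat * A = Jmat)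
    (i j : Fin 3) :
    conj (A 2 i) * A 0 j + conj (A 1 i) * A 1 j + conj (A 0 i) * A 2 j = Jmat i j := by
  rw [← hA]; simp [Matrix.mul_apply, Fin.sum_univ_three, Jmat]

lemma Jmat_mul_mul_Jmat_apply (A : Mat₃) (i j : Fin 3) :
    (Jmat * A * Jmat) i j = A i.rev j.rev := by
  fin_cases i <;> fin_cases j <;>
    simp [Matrix.mul_apply, Fin.sum_univ_three, Jmat, vecMul, dotProduct]

lemma Jmat_mul_Jmat_mul (A : Mat₃) : Jmat * (Jmat * A) = A := by
  rw [← Matrix.mul_assoc, Jmat_mul_Jmat, Matrix.one_mul]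

lemma val_inv_eq_of_unitary (g : GL (Fin 3) ℂ) (hg : (g : Mat₃)ᴴ * Jmat * g = Jmat) :
    (↑g⁻¹ : Mat₃) = Jmat * (g : Mat₃)ᴴ * Jmat :=
  Units.inv_eq_of_mul_eq_one_left <| by
    rw [Matrix.mul_assoc, Matrix.mul_assoc, ← Matrix.mul_assoc _ Jmat, hg, Jmat_mul_Jmat]

def U21O7 : Subgroup (GL (Fin 3) ℂ) where
  carrier := {g | (g : Mat₃)ᴴ * Jmat * g = Jmat ∧
    ∀ i j, (g : Mat₃) i j ∈ O7ring}
  mul_mem' := by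
    rintro g h ⟨hgJ, hgO⟩ ⟨hhJ, hhO⟩
    refine ⟨?_, fun i j => ?_⟩
    · calc ((g * h : GL (Fin 3) ℂ) : Mat₃)ᴴ * Jmat * ↑(g * h)
          = (h : Mat₃)ᴴ * (↑g ᴴ * Jmat * ↑g) * ↑h := by
            simp only [Units.val_mul, conjTranspose_mul, Matrix.mul_assoc]
        _ = Jmat := by rw [hgJ, hhJ]
    · rw [Units.val_mul, Matrix.mul_apply]
      exact sum_mem fun k _ => mul_mem (hgO i k) (hhO k j)
  one_mem' := by
    refine ⟨by simp, fun i j => ?_⟩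
    rw [Units.val_one, Matrix.one_apply]
    split_ifs
    exacts [one_mem _, zero_mem _]
  inv_mem' := by
    rintro g ⟨hgJ, hgO⟩
    rw [Set.mem_ofPred_eq, val_inv_eq_of_unitary g hgJ]
    refine ⟨?_, fun i j => ?_⟩
    · have hright : (g : Mat₃) * (Jmat * (↑g)ᴴ * Jmat) = 1 := by
        rw [← val_inv_eq_of_unitary g hgJ, Units.mul_inv]
      have hJ : Jmatᴴ = Jmat := by ext i j; fin_cases i <;> fin_cases j <;> simp [Jmat]
      calc (Jmat * (↑g)ᴴ * Jmat)ᴴ * Jmat * (Jmat * (↑g)ᴴ * Jmat)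
          = Jmat * ((g : Mat₃) * (Jmat * (↑g)ᴴ * Jmat)) := by
            simp only [conjTranspose_mul, conjTranspose_conjTranspose, hJ, Matrix.mul_assoc,
              Jmat_mul_Jmat_mul]
        _ = Jmat := by rw [hright, Matrix.mul_one]
    · rw [Jmat_mul_mul_Jmat_apply, conjTranspose_apply]
      exact O7ring.conj_mem (hgO _ _)

lemma toGL_mem_U21O7 {M : Mat₃} (hMJ : Mᴴ * Jmat * M = Jmat)
    (hMO : ∀ i j, M i j ∈ O7ring) : toGL M hMJ ∈ U21O7 :=
  ⟨hMJ, hMO⟩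

def stabGen : Subgroup (GL (Fin 3) ℂ) :=
  Subgroup.closure {toGL R₁ hR₁, toGL R₂ hR₂, toGL R₃ hR₃, toGL T hT}

lemma stabGen_le_U21O7 : stabGen ≤ U21O7 := by
  have hω := O7ring.ω_mem
  have hω' := O7ring.conj_mem hω
  have h7 := O7ring.I_mul_sqrt_seven_mem
  refine (Subgroup.closure_le _).2 ?_
  rintro _ (rfl | rfl | rfl | rfl) <;> refine toGL_mem_U21O7 _ fun i j => ?_ <;>
    fin_cases i <;> fin_cases j <;> simp [R₁, R₂, R₃, T, zero_mem, one_mem, *]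

def heis (β γ : ℂ) : Mat₃ :=
  !![1, β, γ; 0, 1, -conj β; 0, 0, 1]

lemma heis_mul_heis (β γ β' γ' : ℂ) :
    heis β γ * heis β' γ' = heis (β + β') (γ + γ' - β * conj β') := by
  ext i j
  fin_cases i <;> fin_cases j <;>
    simp [heis, Matrix.mul_apply, Fin.sum_univ_three] <;> ring

lemma heis_zero_zero : heis 0 0 = 1 := by
  ext i j
  fin_cases i <;> fin_cases j <;> simp [heis]

lemma heis_params_of_mem_U21O7 {β γ : ℂ} {g : GL (Fin 3) ℂ} (hg : g ∈ U21O7)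
    (hβγ : (g : Mat₃) = heis β γ) :
    γ ∈ O7ring ∧ γ + conj γ = -(β * conj β) := by
  obtain ⟨hgJ, hgO⟩ := hg
  rw [hβγ] at hgJ hgO
  refine ⟨by simpa [heis] using hgO 0 2, ?_⟩
  have h22 := conj_mul_add_eq_Jmat_apply hgJ 2 2
  simp [heis, Jmat] at h22
  linear_combination h22

def HeisInStabGen (β γ : ℂ) : Prop :=
  ∃ g ∈ stabGen, (g : Mat₃) = heis β γ

lemma heisInStabGen_zero : HeisInStabGen 0 0 :=
  ⟨1, one_mem _, by rw [Units.val_one, heis_zero_zero]⟩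

lemma HeisInStabGen.mul {β γ β' γ' : ℂ} (h : HeisInStabGen β γ) (h' : HeisInStabGen β' γ') :
    HeisInStabGen (β + β') (γ + γ' - β * conj β') := by
  obtain ⟨g, hg, hgv⟩ := h
  obtain ⟨g', hg', hgv'⟩ := h'
  exact ⟨g * g', mul_mem hg hg', by rw [Units.val_mul, hgv, hgv', heis_mul_heis]⟩

lemma HeisInStabGen.inv {β γ : ℂ} (h : HeisInStabGen β γ) :
    HeisInStabGen (-β) (-γ - β * conj β) := by
  obtain ⟨g, hg, hgv⟩ := h
  refine ⟨g⁻¹, inv_mem hg, Units.inv_eq_of_mul_eq_one_right ?_⟩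
  rw [hgv, heis_mul_heis, map_neg, ← heis_zero_zero]
  congr 1 <;> ring

lemma heisInStabGen_T : HeisInStabGen 0 (I * (√7 : ℝ)) :=
  ⟨toGL T hT, Subgroup.subset_closure (by simp), by
    ext i j; fin_cases i <;> fin_cases j <;> simp [toGL, T, heis]⟩

lemma heisInStabGen_R₂_mul_R₁ : HeisInStabGen (-1) (-conj ω) :=
  ⟨toGL R₂ hR₂ * toGL R₁ hR₁,
    mul_mem (Subgroup.subset_closure (by simp)) (Subgroup.subset_closure (by simp)), by
    ext i j; fin_cases i <;> fin_cases j <;>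
      simp [toGL, R₁, R₂, heis, Matrix.mul_apply, Fin.sum_univ_three]⟩

lemma heisInStabGen_R₃_mul_R₁ : HeisInStabGen (-conj ω) (-1) :=
  ⟨toGL R₃ hR₃ * toGL R₁ hR₁,
    mul_mem (Subgroup.subset_closure (by simp)) (Subgroup.subset_closure (by simp)), by
    ext i j; fin_cases i <;> fin_cases j <;>
      simp [toGL, R₁, R₃, heis, Matrix.mul_apply, Fin.sum_univ_three]⟩

def heisBase : AddSubgroup ℂ where
  carrier := {β | ∃ γ, HeisInStabGen β γ}
  zero_mem' := ⟨0, heisInStabGen_zero⟩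
  add_mem' := fun ⟨_, h⟩ ⟨_, h'⟩ => ⟨_, h.mul h'⟩
  neg_mem' := fun ⟨_, h⟩ => ⟨_, h.inv⟩

def heisCentre : AddSubgroup ℂ where
  carrier := {γ | HeisInStabGen 0 γ}
  zero_mem' := heisInStabGen_zero
  add_mem' := fun h h' => by simpa using h.mul h'
  neg_mem' := fun h => by simpa using h.inv

lemma O7ring_le_heisBase : O7ring.toAddSubgroup ≤ heisBase := by
  intro β hβ
  have hneg1 : (-1 : ℂ) ∈ heisBase := ⟨_, heisInStabGen_R₂_mul_R₁⟩
  have hnegconj : -conj ω ∈ heisBase := ⟨_, heisInStabGen_R₃_mul_R₁⟩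
  have h1 : (1 : ℂ) ∈ heisBase := by simpa using neg_mem hneg1
  have hω : ω ∈ heisBase := by
    have := add_mem h1 hnegconj
    rwa [conj_ω, ← sub_eq_add_neg, sub_sub_cancel] at this
  obtain ⟨a, b, rfl⟩ := hβ
  simpa using add_mem (zsmul_mem h1 a) (zsmul_mem hω b)

lemma heisInStabGen_of_mem {β γ : ℂ} (hβ : β ∈ O7ring) (hγ : γ ∈ O7ring)
    (hβγ : γ + conj γ = -(β * conj β)) : HeisInStabGen β γ := by
  obtain ⟨γ₀, h₀⟩ := O7ring_le_heisBase hβ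
  obtain ⟨g, hg, hgv⟩ := h₀
  obtain ⟨hγ₀, hβγ₀⟩ := heis_params_of_mem_U21O7 (stabGen_le_U21O7 hg) hgv
  obtain ⟨k, hk⟩ := O7ring.exists_int_mul_of_add_conj_eq_zero (sub_mem hγ hγ₀)
    (by rw [map_sub]; linear_combination hβγ - hβγ₀)
  have hcentre : γ - γ₀ ∈ heisCentre := by
    rw [hk, ← zsmul_eq_mul]; exact zsmul_mem heisInStabGen_T k
  simpa using hcentre.mul ⟨g, hg, hgv⟩

lemma mem_stabGen_of_unitriangular {g : GL (Fin 3) ℂ} (hg : g ∈ U21O7)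
    (h10 : (g : Mat₃) 1 0 = 0) (h20 : (g : Mat₃) 2 0 = 0)
    (h21 : (g : Mat₃) 2 1 = 0) (h00 : (g : Mat₃) 0 0 = 1)
    (h11 : (g : Mat₃) 1 1 = 1) (h22 : (g : Mat₃) 2 2 = 1) :
    g ∈ stabGen := by
  obtain ⟨hgJ, hgO⟩ := hg
  have h12 : (g : Mat₃) 1 2 = -conj ((g : Mat₃) 0 1) := by
    have := conj_mul_add_eq_Jmat_apply hgJ 1 2
    simp [Jmat, h21, h11, h22] at this
    linear_combination this
  have hheis : (g : Mat₃) = heis (g 0 1) (g 0 2) := by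
    ext i j; fin_cases i <;> fin_cases j <;> simp [heis, h10, h20, h21, h00, h11, h22, h12]
  obtain ⟨g', hg', hg'v⟩ := heisInStabGen_of_mem (hgO 0 1) (hgO 0 2) <| by
    have := conj_mul_add_eq_Jmat_apply hgJ 2 2
    simp [Jmat, h12, h22] at this
    linear_combination this
  rwa [← Units.ext (hg'v.trans hheis.symm)]

lemma toGL_R₁_mem_stabGen : toGL R₁ hR₁ ∈ stabGen :=
  Subgroup.subset_closure (by simp)

lemma mem_stabGen_of_fixes {g : GL (Fin 3) ℂ} (hg : g ∈ U21O7)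
    (h10 : (g : Mat₃) 1 0 = 0) (h20 : (g : Mat₃) 2 0 = 0)
    (h00 : (g : Mat₃) 0 0 = 1) : g ∈ stabGen := by
  have hform := conj_mul_add_eq_Jmat_apply hg.1
  have h22 : (g : Mat₃) 2 2 = 1 := by
    simpa [Jmat, h10, h20, h00] using hform 0 2
  have h21 : (g : Mat₃) 2 1 = 0 := by
    simpa [Jmat, h10, h20, h00] using hform 0 1
  have h11 : conj ((g : Mat₃) 1 1) * (g : Mat₃) 1 1 = 1 := by
    simpa [Jmat, h21] using hform 1 1
  rcases O7ring.eq_one_or_eq_neg_one_of_conj_mul_eq_one (hg.2 1 1) (hg.2 1 1) h11 with h11 | h11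
  · exact mem_stabGen_of_unitriangular hg h10 h20 h21 h00 h11 h22
  · -- multiplying by the reflection `R₁` flips the sign of the middle column
    have hgR : g * toGL R₁ hR₁ ∈ stabGen := by
      apply mem_stabGen_of_unitriangular (mul_mem hg (stabGen_le_U21O7 toGL_R₁_mem_stabGen)) <;>
        simp [toGL, R₁, Matrix.mul_apply, Fin.sum_univ_three, h10, h20, h21, h00, h11, h22]
    have hR₁R₁ : toGL R₁ hR₁ * toGL R₁ hR₁ = 1 := by
      ext i j; fin_cases i <;> fin_cases j <;> simp [toGL, R₁]
    simpa [mul_assoc, hR₁R₁] using mul_mem hgR toGL_R₁_mem_stabGen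

/-- **Generators of the stabiliser of `q∞` in `PU(2,1;O7)`**: every matrix
`M ∈ U(2,1;O7)` fixing `q∞` (i.e. mapping `(1,0,0)ᵗ` to a scalar multiple of itself)
agrees, up to sign, with an element of the subgroup of `GL(3,ℂ)` generated by
`R₁, R₂, R₃, T`. -/
theorem stabiliser_O7_generated
    (M : Matrix (Fin 3) (Fin 3) ℂ)
    (hM : ∀ i j, M i j ∈ O7)
    (hU : Mᴴ * Jmat * M = Jmat)
    (hfix : ∃ c : ℂ, M.mulVec ![1,0,0] = c • ![1,0,0]) :
    ∃ U ∈ Subgroup.closure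
        ({toGL R₁ hR₁, toGL R₂ hR₂, toGL R₃ hR₃, toGL T hT} :
          Set (GL (Fin 3) ℂ)),
      (U : Matrix (Fin 3) (Fin 3) ℂ) = M ∨ (U : Matrix (Fin 3) (Fin 3) ℂ) = -M := by
  obtain ⟨c, hc⟩ := hfix
  have h10 : M 1 0 = 0 := by
    simpa [Matrix.mulVec, dotProduct, Fin.sum_univ_three] using congrFun hc 1
  have h20 : M 2 0 = 0 := by
    simpa [Matrix.mulVec, dotProduct, Fin.sum_univ_three] using congrFun hc 2
  have hunit : conj (M 0 0) * M 2 2 = 1 := by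
    simpa [Jmat, h10, h20] using conj_mul_add_eq_Jmat_apply hU 0 2
  rcases O7ring.eq_one_or_eq_neg_one_of_conj_mul_eq_one (hM 0 0) (hM 2 2) hunit with h00 | h00
  · exact ⟨toGL M hU, mem_stabGen_of_fixes (toGL_mem_U21O7 hU hM) h10 h20 h00, Or.inl rfl⟩
  · have hU' : (-M)ᴴ * Jmat * (-M) = Jmat := by simpa using hU
    refine ⟨toGL (-M) hU', mem_stabGen_of_fixes (toGL_mem_U21O7 hU' fun i j => neg_mem (hM i j))
      (by simp [toGL, h10]) (by simp [toGL, h20]) (by simp [toGL, h00]), Or.inr rfl⟩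

end
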